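/- arXiv:2003.08903 — 5 statements merged into one kernel-verified Lean document; each statement's English description precedes it below -/
import Mathlib

section
/- Let X be a set with a fixed total order and let w, u, v be nonempty words over X with w = uv and w a Lyndon word. Then the following are equivalent: (i) v is the minimal, with respect to the alphabetic order, nontrivial right factor (suffix) of w which is a Lyndon word; (ii) v is the longest nontrivial right factor (suffix) of w which is a Lyndon word. -/
/-- A nonempty word over a totally ordered alphabet is *Lyndon* if it is strictly smaller,
in the alphabetic (lexicographic) order, than each of its nontrivial proper right factors
(i.e. nonempty proper suffixes). -/
def IsLyndon {X : Type*} [LinearOrder X] (w : List X) : Prop :=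
  w ≠ [] ∧ ∀ k : ℕ, k < w.length → 0 < k → w < w.drop k

/-! Among the Lyndon suffixes of a word, the alphabetic order is the reverse of the length
order: a longer Lyndon suffix has every shorter suffix as a proper right factor, so it is
strictly smaller than each of them. -/

namespace IsLyndon

variable {X : Type*} [LinearOrder X]

theorem drop_lt_drop {w : List X} {i j : ℕ} (hL : IsLyndon (w.drop i)) (hij : i < j)
    (hj : j < w.length) : w.drop i < w.drop j := by
  have hdrop : (w.drop i).drop (j - i) = w.drop j := by
    rw [List.drop_drop, Nat.add_sub_cancel' hij.le]
  simpa only [hdrop] using hL.2 (j - i) (by rw [List.length_drop]; omega) (by omega)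

theorem drop_le_drop_iff {w : List X} {i j : ℕ} (hi : IsLyndon (w.drop i))
    (hj : IsLyndon (w.drop j)) (hiw : i < w.length) (hjw : j < w.length) :
    w.drop i ≤ w.drop j ↔ i ≤ j := by
  rcases lt_trichotomy i j with hij | rfl | hji
  · exact iff_of_true (hi.drop_lt_drop hij hjw).le hij.le
  · exact iff_of_true le_rfl le_rfl
  · exact iff_of_false (hj.drop_lt_drop hji hiw).not_ge hji.not_ge

end IsLyndon

theorem stmt_0_general {X : Type*} [LinearOrder X] (w u v : List X)
    (hw : w = u ++ v) :
    (IsLyndon v ∧ ∀ k : ℕ, k < w.length → 0 < k → IsLyndon (w.drop k) → v ≤ w.drop k) ↔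
      (IsLyndon v ∧ ∀ k : ℕ, k < w.length → 0 < k → IsLyndon (w.drop k) →
        (w.drop k).length ≤ v.length) := by
  have hv : w.drop u.length = v := by simp [hw]
  refine and_congr_right fun hvL => forall₄_congr fun k hk _ hkL => ?_
  have hu : u.length < w.length := by
    simpa [hw] using List.length_pos_iff.mpr hvL.1
  rw [← hv] at hvL ⊢
  rw [hvL.drop_le_drop_iff hkL hu hk, List.length_drop, List.length_drop]
  omega

/-- Let `w = u ++ v` with `u, v` nonempty and `w` Lyndon.  Then `v` is the alphabetically
minimal nontrivial proper Lyndon right factor of `w` if and only if `v` is the longest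
nontrivial proper Lyndon right factor of `w`. -/
theorem stmt_0 {X : Type*} [LinearOrder X] (w u v : List X)
    (hw : w = u ++ v) (hu : u ≠ []) (hv : v ≠ []) (hL : IsLyndon w) :
    (IsLyndon v ∧ ∀ k : ℕ, k < w.length → 0 < k → IsLyndon (w.drop k) → v ≤ w.drop k) ↔
      (IsLyndon v ∧ ∀ k : ℕ, k < w.length → 0 < k → IsLyndon (w.drop k) →
        (w.drop k).length ≤ v.length) :=
  stmt_0_general w u v hw
end

section
/- Let p be a prime number and 1 ≤ i ≤ n integers, and for 1 ≤ i' ≤ n let j_n(i') denote the least integer j ≥ 0 such that i'·p^j ≥ n (equivalently j_n(i') = ⌈log_p(n/i')⌉). Then the following are equivalent: (a) i'·p^{j_n(i')} ≥ i·p^{j_n(i)} for every integer 1 ≤ i' ≤ i; (b) i = ⌈n/p^k⌉ for some integer k ≥ 0. -/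
/-- Ceiling division of natural numbers: `cdiv a b = ⌈a / b⌉` (for `b > 0`). -/
def cdiv (a b : ℕ) : ℕ := (a + b - 1) / b

/-- `jn p n i` is `j_n(i)`, the least integer `j ≥ 0` such that `i * p ^ j ≥ n`. -/
noncomputable def jn (p n i : ℕ) : ℕ := sInf {j : ℕ | n ≤ i * p ^ j}

/-! Write `j = j_n(i)` and `i₀ = ⌈n / p ^ j⌉`. Then `i₀ ≤ i` is the least `i'` with
`n ≤ i' * p ^ j`, so `j_n(i₀) = j` and `i₀ * p ^ j_n(i₀) ≤ i * p ^ j`: condition (a) forces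
`i = i₀`. Conversely, `k ↦ ⌈n / p ^ k⌉ * p ^ k` is monotone and `j_n` is antitone, so for
`i' ≤ i₀` we get `i₀ * p ^ j ≤ ⌈n / p ^ j_n(i')⌉ * p ^ j_n(i') ≤ i' * p ^ j_n(i')`.
Finally `i = ⌈n / p ^ k⌉` for some `k` exactly when `i = i₀`. -/

section cdiv

variable {a b c : ℕ}

lemma cdiv_le_iff (hb : 0 < b) : cdiv a b ≤ c ↔ a ≤ c * b := by
  rw [mul_comm]
  -- `cdiv a b` is definitionally Mathlib's `a ⌈/⌉ b`.
  exact ceilDiv_le_iff_le_mul hb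

lemma le_cdiv_mul (hb : 0 < b) : a ≤ cdiv a b * b :=
  (cdiv_le_iff hb).1 le_rfl

lemma cdiv_pos (hb : 0 < b) (ha : 0 < a) : 0 < cdiv a b :=
  Nat.pos_of_ne_zero fun h => by simpa [h] using (le_cdiv_mul (a := a) hb).trans_lt' ha

lemma cdiv_le_cdiv_of_le (hb : 0 < b) (hbc : b ≤ c) : cdiv a c ≤ cdiv a b :=
  (cdiv_le_iff (hb.trans_le hbc)).2 ((le_cdiv_mul hb).trans (Nat.mul_le_mul_left _ hbc))

lemma cdiv_mul_le_cdiv_mul_of_dvd (hc : 0 < c) (hbc : b ∣ c) : cdiv a b * b ≤ cdiv a c * c := by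
  obtain ⟨d, rfl⟩ := hbc
  have hb : 0 < b := Nat.pos_of_mul_pos_right hc
  have h : cdiv a b ≤ cdiv a (b * d) * d := by
    rw [cdiv_le_iff hb, mul_assoc, mul_comm d]
    exact le_cdiv_mul hc
  calc cdiv a b * b ≤ cdiv a (b * d) * d * b := Nat.mul_le_mul_right _ h
    _ = cdiv a (b * d) * (b * d) := by ring

end cdiv

lemma monotone_cdiv_pow_mul_pow {p : ℕ} (n : ℕ) (hp : 0 < p) :
    Monotone fun k => cdiv n (p ^ k) * p ^ k :=
  fun _ k hjk => cdiv_mul_le_cdiv_mul_of_dvd (pow_pos hp k) (pow_dvd_pow p hjk)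

section jn

variable {p n i i' : ℕ}

lemma le_mul_pow_jn (hp : 1 < p) (hi : 0 < i) : n ≤ i * p ^ jn p n i :=
  Nat.sInf_mem (s := {j | n ≤ i * p ^ j})
    ⟨n, (Nat.lt_pow_self hp).le.trans (Nat.le_mul_of_pos_left _ hi)⟩

lemma jn_le {j : ℕ} (h : n ≤ i * p ^ j) : jn p n i ≤ j :=
  Nat.sInf_le h

lemma jn_le_jn (hp : 1 < p) (hi' : 0 < i') (h : i' ≤ i) : jn p n i ≤ jn p n i' :=
  jn_le ((le_mul_pow_jn hp hi').trans (Nat.mul_le_mul_right _ h))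

lemma cdiv_pow_jn_le (hp : 1 < p) (hi : 0 < i) : cdiv n (p ^ jn p n i) ≤ i :=
  (cdiv_le_iff (pow_pos (by omega) _)).2 (le_mul_pow_jn hp hi)

lemma jn_cdiv_pow_jn (hp : 1 < p) (hn : 0 < n) (hi : 0 < i) :
    jn p n (cdiv n (p ^ jn p n i)) = jn p n i := by
  have hpj : 0 < p ^ jn p n i := pow_pos (by omega) _
  exact le_antisymm (jn_le (le_cdiv_mul hpj))
    (jn_le_jn hp (cdiv_pos hpj hn) (cdiv_pow_jn_le hp hi))

lemma exists_eq_cdiv_pow_iff (hp : 1 < p) (hi : 0 < i) :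
    (∃ k, i = cdiv n (p ^ k)) ↔ i = cdiv n (p ^ jn p n i) := by
  refine ⟨?_, fun h => ⟨_, h⟩⟩
  rintro ⟨k, rfl⟩
  have hjk : jn p n (cdiv n (p ^ k)) ≤ k := jn_le (le_cdiv_mul (pow_pos (by omega) k))
  exact le_antisymm
    (cdiv_le_cdiv_of_le (pow_pos (by omega) _) (Nat.pow_le_pow_right (by omega) hjk))
    (cdiv_pow_jn_le hp hi)

lemma forall_mul_pow_jn_le_iff (hp : 1 < p) (hn : 0 < n) (hi : 0 < i) :
    (∀ i' : ℕ, 1 ≤ i' → i' ≤ i → i * p ^ jn p n i ≤ i' * p ^ jn p n i') ↔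
      i = cdiv n (p ^ jn p n i) := by
  set i₀ := cdiv n (p ^ jn p n i)
  have hpj : 0 < p ^ jn p n i := pow_pos (by omega) _
  constructor
  · intro h
    have hi₀ : 1 ≤ i₀ := cdiv_pos hpj hn
    have hle := h i₀ hi₀ (cdiv_pow_jn_le hp hi)
    rw [jn_cdiv_pow_jn hp hn hi] at hle
    exact le_antisymm (Nat.le_of_mul_le_mul_right hle hpj) (cdiv_pow_jn_le hp hi)
  · intro h i' hi' hi'i
    calc i * p ^ jn p n i = i₀ * p ^ jn p n i := by rw [← h]
      _ ≤ cdiv n (p ^ jn p n i') * p ^ jn p n i' :=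
        monotone_cdiv_pow_mul_pow n (by omega) (jn_le_jn hp hi' hi'i)
      _ ≤ i' * p ^ jn p n i' := Nat.mul_le_mul_right _ (cdiv_pow_jn_le hp hi')

end jn

/-- For a prime `p` and `1 ≤ i ≤ n`, the following are equivalent:
(a) `i' * p ^ j_n(i') ≥ i * p ^ j_n(i)` for every `1 ≤ i' ≤ i`;
(b) `i = ⌈n / p ^ k⌉` for some `k ≥ 0`. -/
theorem stmt_2 {p n i : ℕ} (hp : p.Prime) (h1 : 1 ≤ i) (h2 : i ≤ n) :
    (∀ i' : ℕ, 1 ≤ i' → i' ≤ i → i * p ^ jn p n i ≤ i' * p ^ jn p n i') ↔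
      ∃ k : ℕ, i = cdiv n (p ^ k) := by
  rw [forall_mul_pow_jn_le_iff hp.one_lt (by omega) h1, exists_eq_cdiv_pow_iff hp.one_lt h1]
end

section
/- Let p be a prime, S the free profinite group on a basis X, and n ≥ 1. If σ ∈ S_{(n,p)}, then for every word w ∈ X* of length i with 1 ≤ i ≤ n, the Magnus coefficient ε_{w}(σ) lies in p^{j_n(i)}·Z_p. -/
/-- `J(n)`: the set of integers `1 ≤ i ≤ n` of the form `i = ⌈n / p^k⌉` for some `k ≥ 0`. -/
def Jset (p n : ℕ) : Set ℕ := {i | 1 ≤ i ∧ i ≤ n ∧ ∃ k : ℕ, i = cdiv n (p ^ k)}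

/-- The commutator `[g, h] = g⁻¹ h⁻¹ g h`. -/
def pcomm {H : Type*} [Group H] (g h : H) : H := g⁻¹ * h⁻¹ * g * h

variable {G : Type*} [Group G] [TopologicalSpace G] [IsTopologicalGroup G]

/-- The closed subgroup of a topological group generated by a set. -/
def closedClosure (s : Set G) : Subgroup G := (Subgroup.closure s).topologicalClosure

/-- For closed subgroups `K, K'` of `G`, the closed subgroup `[K, K']` generated by all
commutators `[k, k'] = k⁻¹ k'⁻¹ k k'` with `k ∈ K`, `k' ∈ K'`. -/
def closedCommutator (K K' : Subgroup G) : Subgroup G :=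
  closedClosure {x | ∃ k ∈ K, ∃ k' ∈ K', x = pcomm k k'}

/-- For a closed subgroup `K` of `G` and `m ≥ 1`, the closed subgroup `K^m` generated by all
`m`-th powers of elements of `K`. -/
def closedPow (K : Subgroup G) (m : ℕ) : Subgroup G :=
  closedClosure {x | ∃ k ∈ K, x = k ^ m}

/-- The (closed) lower central series of a topological group: `G^{(1)} = G` and
`G^{(i+1)} = [G, G^{(i)}]`.  (The value at `0` is junk, set to `⊤`.) -/
def lcsC (G : Type*) [Group G] [TopologicalSpace G] [IsTopologicalGroup G] : ℕ → Subgroup G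
  | 0 => ⊤
  | 1 => ⊤
  | (i + 2) => closedCommutator ⊤ (lcsC G (i + 1))

/-- The `p`-Zassenhaus filtration of a topological group:
`G_{(n,p)} = ∏_{i p^j ≥ n} (G^{(i)})^{p^j}`, the closed subgroup generated by all `p^j`-th
powers of elements of the `i`-th closed lower central series term with `i * p^j ≥ n`. -/
def Zas (p n : ℕ) (G : Type*) [Group G] [TopologicalSpace G] [IsTopologicalGroup G] : Subgroup G :=
  closedClosure {g | ∃ i j : ℕ, 1 ≤ i ∧ n ≤ i * p ^ j ∧ ∃ h ∈ lcsC G i, g = h ^ p ^ j}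

/-- The closed subgroup `(G_{(n,p)})^p [G, G_{(n,p)}]` generated by `p`-th powers of elements of
`G_{(n,p)}` together with commutators `[G, G_{(n,p)}]`. -/
def ZasPow (p n : ℕ) (G : Type*) [Group G] [TopologicalSpace G] [IsTopologicalGroup G] :
    Subgroup G :=
  ((closedPow (Zas p n G) p) ⊔ (closedCommutator ⊤ (Zas p n G))).topologicalClosure

theorem closure_normal_of_conj {H : Type*} [Group H] (s : Set H)
    (h : ∀ g : H, ∀ x ∈ s, g * x * g⁻¹ ∈ s) : (Subgroup.closure s).Normal := by
  constructor
  intro x hx g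
  have hmem : ((MulAut.conj g).toMonoidHom : H →* H) x ∈
      Subgroup.map (MulAut.conj g).toMonoidHom (Subgroup.closure s) :=
    Subgroup.mem_map_of_mem _ hx
  rw [MonoidHom.map_closure] at hmem
  have hsub : ((MulAut.conj g).toMonoidHom : H →* H) '' s ⊆ s := by
    rintro y ⟨z, hz, rfl⟩
    simpa [MulAut.conj] using h g z hz
  have := Subgroup.closure_mono hsub hmem
  simpa [MulAut.conj] using this

theorem closedClosure_normal (s : Set G) (h : ∀ g : G, ∀ x ∈ s, g * x * g⁻¹ ∈ s) :
    (closedClosure s).Normal := by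
  haveI := closure_normal_of_conj s h
  exact Subgroup.is_normal_topologicalClosure _

theorem lcsC_normal (G : Type*) [Group G] [TopologicalSpace G] [IsTopologicalGroup G] :
    ∀ i : ℕ, (lcsC G i).Normal
  | 0 => by rw [lcsC]; infer_instance
  | 1 => by rw [lcsC]; infer_instance
  | (i + 2) => by
    rw [lcsC]
    have hN := lcsC_normal G (i + 1)
    apply closedClosure_normal
    rintro g x ⟨k, -, k', hk', rfl⟩
    refine ⟨g * k * g⁻¹, trivial, g * k' * g⁻¹, hN.conj_mem k' hk' g, ?_⟩
    simp only [pcomm]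
    group

/-- The Zassenhaus subgroups are normal (indeed characteristic). -/
theorem Zas_normal (p n : ℕ) (G : Type*) [Group G] [TopologicalSpace G] [IsTopologicalGroup G] :
    (Zas p n G).Normal := by
  apply closedClosure_normal
  rintro g x ⟨i, j, hi, hij, h, hh, rfl⟩
  refine ⟨i, j, hi, hij, g * h * g⁻¹, (lcsC_normal G i).conj_mem h hh g, ?_⟩
  rw [conj_pow]

instance (p n : ℕ) (G : Type*) [Group G] [TopologicalSpace G] [IsTopologicalGroup G] :
    (Zas p n G).Normal := Zas_normal p n G

/-- `ι : X → S` makes `S` the free profinite group on the basis `X` (in the sense of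
Fried–Jarden §17.4): `S` is a profinite group, the basis converges to `1`, and every map from
`X` to a finite group `A` which is `1` almost everywhere extends uniquely to a continuous
(equivalently: open-kernel) homomorphism `S → A`. -/
structure IsFreeProfinite (X : Type*) (S : Type*) [Group S] [TopologicalSpace S]
    (ι : X → S) : Prop where
  compact : CompactSpace S
  t2 : T2Space S
  totallyDisconnected : TotallyDisconnectedSpace S
  topGroup : IsTopologicalGroup S
  converges : ∀ N : Subgroup S, N.Normal → IsOpen (N : Set S) → {x | ι x ∉ N}.Finite
  lift : ∀ (A : Type) (_ : Group A) (_ : Finite A) (φ : X → A), {x | φ x ≠ 1}.Finite →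
    ∃! ψ : S →* A, IsOpen (ψ.ker : Set S) ∧ ∀ x, ψ (ι x) = φ x

/-- `ε` is the family of coefficients of the continuous Magnus homomorphism
`Λ : S → ℤ_p⟨⟨X⟩⟩^×` determined by `Λ(ι x) = 1 + x`:  each coefficient function
`ε_w : S → ℤ_p` is continuous, `ε_∅ = 1`, multiplicativity of `Λ` reads
`ε_w(στ) = ∑_{w = u v} ε_u(σ) ε_v(τ)`, and the coefficients of `Λ(ι x) = 1 + x` are as
prescribed. -/
structure IsMagnus (p : ℕ) [Fact p.Prime] {X S : Type*} [DecidableEq X] [Group S] [TopologicalSpace S]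
    (ι : X → S) (ε : List X → S → ℤ_[p]) : Prop where
  continuous : ∀ w, Continuous (ε w)
  empty : ∀ σ, ε [] σ = 1
  mul : ∀ (w : List X) (σ τ : S), ε w (σ * τ) =
    ∑ k ∈ Finset.range (w.length + 1), ε (w.take k) σ * ε (w.drop k) τ
  gen : ∀ (x : X) (w : List X), ε w (ι x) = if w = [] ∨ w = [x] then 1 else 0

section Aux

set_option linter.unusedSectionVars false
set_option linter.unusedVariables false

theorem jn_le_s6 {p m a e : ℕ} (h : m ≤ a * p ^ e) : jn p m a ≤ e := Nat.sInf_le h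

theorem jn_spec (p : ℕ) [Fact p.Prime] {m a : ℕ} (ha : 1 ≤ a) : m ≤ a * p ^ jn p m a := by
  have hp : 2 ≤ p := (Fact.out : p.Prime).two_le
  have hne : {j : ℕ | m ≤ a * p ^ j}.Nonempty := by
    refine ⟨m, ?_⟩
    calc m ≤ p ^ m := le_of_lt (Nat.lt_pow_self (n := m) hp)
    _ ≤ a * p ^ m := Nat.le_mul_of_pos_left _ ha
  exact Nat.sInf_mem hne

theorem jn_anti (p : ℕ) [Fact p.Prime] {m a b : ℕ} (ha : 1 ≤ a) (hab : a ≤ b) :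
    jn p m b ≤ jn p m a :=
  jn_le_s6 (le_trans (jn_spec p ha) (Nat.mul_le_mul_right _ hab))

theorem jn_zero_of_le {p m a : ℕ} (h : m ≤ a) : jn p m a = 0 :=
  Nat.le_zero.mp (jn_le_s6 (by simpa using h))

/-- `p`-divisibility of binomial coefficients `C(p^j, r)`. -/
theorem pow_dvd_choose_pow (p : ℕ) [Fact p.Prime] (j r : ℕ) (hr : 1 ≤ r) (hrq : r ≤ p ^ j) :
    p ^ (j - padicValNat p r) ∣ (p ^ j).choose r := by
  have hp : p.Prime := Fact.out
  set v := padicValNat p r with hv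
  have hpv : p ^ v ∣ r := pow_padicValNat_dvd
  have hvj : v ≤ j := by
    have h1 : p ^ v ≤ p ^ j := le_trans (Nat.le_of_dvd hr hpv) hrq
    exact (Nat.pow_le_pow_iff_right hp.one_lt).mp h1
  set u := r / p ^ v with hu
  have hru : r = p ^ v * u := (Nat.mul_div_cancel' hpv).symm
  have hnd : ¬ p ∣ u := by
    intro hd
    have : p ^ (v + 1) ∣ r := by
      rw [hru, pow_succ]
      exact Nat.mul_dvd_mul (dvd_refl _) hd
    exact pow_succ_padicValNat_not_dvd (by omega) this
  have key : p ^ j ∣ (p ^ j).choose r * r := by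
    obtain ⟨m, hm⟩ : ∃ m, r = m + 1 := ⟨r - 1, by omega⟩
    obtain ⟨s, hs⟩ : ∃ s, p ^ j = s + 1 := ⟨p ^ j - 1, by
      have := pow_pos hp.pos j; omega⟩
    refine ⟨s.choose m, ?_⟩
    rw [hm, hs]
    exact (Nat.add_one_mul_choose_eq s m).symm
  have key2 : p ^ (j - v) * p ^ v ∣ ((p ^ j).choose r * u) * p ^ v := by
    rw [← pow_add]
    have : j - v + v = j := by omega
    rw [this]
    calc p ^ j ∣ (p ^ j).choose r * r := key
    _ = (p ^ j).choose r * u * p ^ v := by rw [hru]; ring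
  have key3 : p ^ (j - v) ∣ (p ^ j).choose r * u :=
    (Nat.mul_dvd_mul_iff_right (pow_pos hp.pos v)).mp key2
  exact (Nat.Coprime.pow_left _ ((Nat.Prime.coprime_iff_not_dvd hp).mpr hnd)).dvd_of_dvd_mul_right
    key3

variable {X S : Type*} [DecidableEq X] [Group S] [TopologicalSpace S] [IsTopologicalGroup S]
  {p : ℕ} [Fact p.Prime] {ι : X → S} {ε : List X → S → ℤ_[p]}

theorem eps_one (hε : IsMagnus p ι ε) :
    ∀ a : ℕ, ∀ w : List X, w.length = a → 1 ≤ a → ε w 1 = 0 := by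
  intro a
  induction a using Nat.strong_induction_on with
  | _ a IH =>
    intro w hw ha
    obtain ⟨m, rfl⟩ : ∃ m, a = m + 1 := ⟨a - 1, (Nat.succ_pred_eq_of_pos ha).symm⟩
    have hmul := hε.mul w 1 1
    rw [mul_one, hw] at hmul
    rw [Finset.sum_range_succ, Finset.sum_range_succ'] at hmul
    have h0 : ε (w.take 0) 1 * ε (w.drop 0) 1 = ε w 1 := by
      simp [hε.empty]
    have hlast : ε (w.take (m + 1)) 1 * ε (w.drop (m + 1)) 1 = ε w 1 := by
      rw [← hw]
      simp [hε.empty]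
    have hmid : ∀ k ∈ Finset.range m, ε (w.take (k + 1)) 1 * ε (w.drop (k + 1)) 1 = 0 := by
      intro k hk
      rw [Finset.mem_range] at hk
      have hlen : (w.take (k + 1)).length = k + 1 := by
        rw [List.length_take]; omega
      rw [IH (k + 1) (by omega) _ hlen (by omega), zero_mul]
    rw [Finset.sum_eq_zero hmid, h0, hlast, zero_add] at hmul
    exact left_eq_add.mp hmul

/-- The basic splitting of the Magnus multiplicativity into first, last and middle terms. -/
theorem eps_mul_eq (hε : IsMagnus p ι ε) (σ τ : S) (w : List X) (m : ℕ) (hw : w.length = m + 1) :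
    ε w (σ * τ) = ε w σ + ε w τ +
      ∑ k ∈ Finset.range m, ε (w.take (k + 1)) σ * ε (w.drop (k + 1)) τ := by
  have hmul := hε.mul w σ τ
  rw [hw, Finset.sum_range_succ, Finset.sum_range_succ'] at hmul
  have h0 : ε (w.take 0) σ * ε (w.drop 0) τ = ε w τ := by simp [hε.empty]
  have hlast : ε (w.take (m + 1)) σ * ε (w.drop (m + 1)) τ = ε w σ := by
    rw [← hw]; simp [hε.empty]
  rw [h0, hlast] at hmul
  rw [hmul]; ring

/-- The subgroup of elements whose Magnus coefficients vanish in degrees `1 ≤ d < i`. -/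
def Vsub (hε : IsMagnus p ι ε) (i : ℕ) : Subgroup S where
  carrier := {σ | ∀ w : List X, 1 ≤ w.length → w.length < i → ε w σ = 0}
  one_mem' := fun w hw _ => eps_one hε w.length w rfl hw
  mul_mem' := by
    intro σ τ hσ hτ w hw hlt
    rw [hε.mul w σ τ]
    apply Finset.sum_eq_zero
    intro k hk
    rw [Finset.mem_range] at hk
    rcases Nat.eq_zero_or_pos k with rfl | hk1
    · rw [List.drop_zero, hτ w hw hlt, mul_zero]
    · have hlen : (w.take k).length = k := by rw [List.length_take]; omega
      rw [hσ (w.take k) (by omega) (by omega), zero_mul]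
  inv_mem' := by
    intro σ hσ w hw hlt
    obtain ⟨m, hm⟩ : ∃ m, w.length = m + 1 := ⟨w.length - 1, by omega⟩
    have h1 : ε w (σ * σ⁻¹) = 0 := by
      rw [mul_inv_cancel]; exact eps_one hε w.length w rfl hw
    rw [eps_mul_eq hε σ σ⁻¹ w m hm] at h1
    have hmid : ∀ k ∈ Finset.range m,
        ε (w.take (k + 1)) σ * ε (w.drop (k + 1)) σ⁻¹ = 0 := by
      intro k hk
      rw [Finset.mem_range] at hk
      have hlen : (w.take (k + 1)).length = k + 1 := by rw [List.length_take]; omega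
      rw [hσ (w.take (k + 1)) (by omega) (by omega), zero_mul]
    rw [Finset.sum_eq_zero hmid, add_zero, hσ w hw hlt, zero_add] at h1
    exact h1

theorem Vsub_closed (hε : IsMagnus p ι ε) (i : ℕ) : IsClosed ((Vsub hε i : Subgroup S) : Set S) := by
  have : ((Vsub hε i : Subgroup S) : Set S) =
      ⋂ (w : List X), ⋂ (_ : 1 ≤ w.length ∧ w.length < i), (ε w) ⁻¹' {0} := by
    ext σ
    simp only [Set.mem_iInter, Set.mem_preimage, Set.mem_singleton_iff]
    constructor
    · intro h w hw; exact h w hw.1 hw.2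
    · intro h w hw hlt; exact h w ⟨hw, hlt⟩
  rw [this]
  exact isClosed_iInter fun w => isClosed_iInter fun _ =>
    IsClosed.preimage (hε.continuous w) isClosed_singleton

/-- Magnus coefficients of the commutator `pcomm k k'` vanish in degrees `< i + 2` when those
of `k'` vanish in degrees `< i + 1`. -/
theorem eps_comm (hε : IsMagnus p ι ε) {k k' : S} {i : ℕ}
    (hvan : ∀ u : List X, 1 ≤ u.length → u.length < i + 1 → ε u k' = 0) :
    ∀ l : ℕ, ∀ w : List X, w.length = l → 1 ≤ l → l < i + 2 → ε w (pcomm k k') = 0 := by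
  have hAB : ∀ w : List X, 1 ≤ w.length → w.length < i + 2 → ε w (k * k') = ε w (k' * k) := by
    intro w hw hlt
    obtain ⟨m, hm⟩ : ∃ m, w.length = m + 1 := ⟨w.length - 1, by omega⟩
    rw [eps_mul_eq hε k k' w m hm, eps_mul_eq hε k' k w m hm]
    have z1 : ∀ j ∈ Finset.range m, ε (w.take (j + 1)) k * ε (w.drop (j + 1)) k' = 0 := by
      intro j hj
      rw [Finset.mem_range] at hj
      have hlen : (w.drop (j + 1)).length = m - j := by rw [List.length_drop]; omega
      rw [hvan (w.drop (j + 1)) (by omega) (by omega), mul_zero]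
    have z2 : ∀ j ∈ Finset.range m, ε (w.take (j + 1)) k' * ε (w.drop (j + 1)) k = 0 := by
      intro j hj
      rw [Finset.mem_range] at hj
      have hlen : (w.take (j + 1)).length = j + 1 := by rw [List.length_take]; omega
      rw [hvan (w.take (j + 1)) (by omega) (by omega), zero_mul]
    rw [Finset.sum_eq_zero z1, Finset.sum_eq_zero z2, add_comm (ε w k)]
  intro l
  induction l using Nat.strong_induction_on with
  | _ l IHl =>
    intro w hw h1 h2
    obtain ⟨m, hm⟩ : ∃ m, l = m + 1 := ⟨l - 1, by omega⟩
    subst hm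
    have hid : k * k' = (k' * k) * pcomm k k' := by unfold pcomm; group
    have hthis := eps_mul_eq hε (k' * k) (pcomm k k') w m hw
    rw [← hid] at hthis
    have zmid : ∀ j ∈ Finset.range m,
        ε (w.take (j + 1)) (k' * k) * ε (w.drop (j + 1)) (pcomm k k') = 0 := by
      intro j hj
      rw [Finset.mem_range] at hj
      have hlen : (w.drop (j + 1)).length = m - j := by rw [List.length_drop]; omega
      rw [IHl (m - j) (by omega) (w.drop (j + 1)) hlen (by omega) (by omega), mul_zero]
    rw [Finset.sum_eq_zero zmid, add_zero, hAB w (by omega) (by omega)] at hthis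
    exact left_eq_add.mp hthis

/-- Magnus coefficients of elements of the `i`-th closed lower central series vanish in
degrees `< i`. -/
theorem vanish_lcsC (hε : IsMagnus p ι ε) :
    ∀ i : ℕ, ∀ h ∈ lcsC S i, ∀ w : List X, 1 ≤ w.length → w.length < i → ε w h = 0
  | 0 => fun h _ w hw hlt => absurd hlt (by omega)
  | 1 => fun h _ w hw hlt => absurd hlt (by omega)
  | (i + 2) => by
    intro h hh w hw hlt
    have IH := vanish_lcsC hε (i + 1)
    have hle : lcsC S (i + 2) ≤ Vsub hε (i + 2) := by
      rw [lcsC]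
      unfold closedCommutator closedClosure
      apply Subgroup.topologicalClosure_minimal
      · rw [Subgroup.closure_le]
        rintro g ⟨a, -, b, hb, rfl⟩
        intro u hu hult
        exact eps_comm hε (fun u' hu' hlt' => IH b hb u' hu' hlt') u.length u rfl hu hult
      · exact Vsub_closed hε (i + 2)
    exact hle hh w hw hlt

/-- `cComp ε σ r w` : sum over decompositions of `w` into `r` nonempty parts of products of
Magnus coefficients of `σ`. -/
noncomputable def cComp [DecidableEq X] (ε : List X → S → ℤ_[p]) (σ : S) : ℕ → List X → ℤ_[p]
  | 0 => fun w => if w = [] then 1 else 0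
  | (r + 1) => fun w =>
      ∑ k ∈ Finset.range w.length, cComp ε σ r (w.take k) * ε (w.drop k) σ

theorem cComp_zero (σ : S) (w : List X) :
    cComp ε σ 0 w = if w = [] then 1 else 0 := rfl

theorem cComp_succ (σ : S) (r : ℕ) (w : List X) :
    cComp ε σ (r + 1) w =
      ∑ k ∈ Finset.range w.length, cComp ε σ r (w.take k) * ε (w.drop k) σ := rfl

/-- Expansion of Magnus coefficients of powers in terms of `cComp`. -/
theorem eps_pow (hε : IsMagnus p ι ε) (σ : S) (q : ℕ) (w : List X) :
    ε w (σ ^ q) = ∑ r ∈ Finset.range (q + 1), (Nat.choose q r : ℤ_[p]) * cComp ε σ r w := by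
  induction q generalizing w with
  | zero =>
    rw [pow_zero]
    simp only [zero_add, Finset.sum_range_one, Nat.choose_self, Nat.cast_one, one_mul]
    rw [cComp_zero]
    by_cases hwe : w = []
    · subst hwe; rw [if_pos rfl, hε.empty]
    · rw [if_neg hwe]
      exact eps_one hε w.length w rfl (by have := List.length_pos_iff.mpr hwe; omega)
  | succ q IH =>
    rw [pow_succ, hε.mul w (σ ^ q) σ, Finset.sum_range_succ]
    have hlast : ε (w.take w.length) (σ ^ q) * ε (w.drop w.length) σ
        = ∑ r ∈ Finset.range (q + 1), (Nat.choose q r : ℤ_[p]) * cComp ε σ r w := by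
      rw [List.take_length, List.drop_length, hε.empty, mul_one, IH w]
    rw [hlast]
    have hmid : ∀ k ∈ Finset.range w.length,
        ε (w.take k) (σ ^ q) * ε (w.drop k) σ =
        ∑ r ∈ Finset.range (q + 1),
          (Nat.choose q r : ℤ_[p]) * (cComp ε σ r (w.take k) * ε (w.drop k) σ) := by
      intro k hk
      rw [IH (w.take k), Finset.sum_mul]
      exact Finset.sum_congr rfl fun r _ => by ring
    rw [Finset.sum_congr rfl hmid, Finset.sum_comm]
    have hswap : ∀ r ∈ Finset.range (q + 1),
        (∑ k ∈ Finset.range w.length,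
          (Nat.choose q r : ℤ_[p]) * (cComp ε σ r (w.take k) * ε (w.drop k) σ)) =
        (Nat.choose q r : ℤ_[p]) * cComp ε σ (r + 1) w := by
      intro r _
      rw [← Finset.mul_sum, cComp_succ]
    rw [Finset.sum_congr rfl hswap]
    have hR : ∑ r ∈ Finset.range (q + 1 + 1), (Nat.choose (q + 1) r : ℤ_[p]) * cComp ε σ r w
        = (∑ r ∈ Finset.range (q + 1), (Nat.choose q r : ℤ_[p]) * cComp ε σ (r + 1) w)
          + ∑ r ∈ Finset.range (q + 1), (Nat.choose q r : ℤ_[p]) * cComp ε σ r w := by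
      rw [Finset.sum_range_succ'
        (fun r => (Nat.choose (q + 1) r : ℤ_[p]) * cComp ε σ r w) (q + 1)]
      have hpas : ∀ r ∈ Finset.range (q + 1),
          (Nat.choose (q + 1) (r + 1) : ℤ_[p]) * cComp ε σ (r + 1) w =
          (Nat.choose q r : ℤ_[p]) * cComp ε σ (r + 1) w +
          (Nat.choose q (r + 1) : ℤ_[p]) * cComp ε σ (r + 1) w := by
        intro r _
        rw [Nat.choose_succ_succ]
        push_cast
        ring
      rw [Finset.sum_congr rfl hpas, Finset.sum_add_distrib]
      have hBF : (∑ r ∈ Finset.range (q + 1),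
            (Nat.choose q (r + 1) : ℤ_[p]) * cComp ε σ (r + 1) w)
          + (Nat.choose (q + 1) 0 : ℤ_[p]) * cComp ε σ 0 w
          = ∑ r ∈ Finset.range (q + 1), (Nat.choose q r : ℤ_[p]) * cComp ε σ r w := by
        have h2 := Finset.sum_range_succ'
          (fun r => (Nat.choose q r : ℤ_[p]) * cComp ε σ r w) (q + 1)
        have h3 := Finset.sum_range_succ
          (fun r => (Nat.choose q r : ℤ_[p]) * cComp ε σ r w) (q + 1)
        simp only [Nat.choose_succ_self, Nat.cast_zero, zero_mul, add_zero] at h3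
        rw [h3] at h2
        simp only [Nat.choose_zero_right, Nat.cast_one, one_mul] at h2 ⊢
        exact h2.symm
      rw [← hBF]
      ring
    rw [hR]

/-- Divisibility of the composition sums `cComp`. -/
theorem cComp_dvd (hε : IsMagnus p ι ε) (σ : S) (m : ℕ)
    (hσ : ∀ u : List X, 1 ≤ u.length → (p : ℤ_[p]) ^ jn p m u.length ∣ ε u σ) :
    ∀ r : ℕ, ∀ w : List X, (p : ℤ_[p]) ^ jn p (r * m) w.length ∣ cComp ε σ r w := by
  intro r
  induction r with
  | zero =>
    intro w
    rw [zero_mul, jn_zero_of_le (Nat.zero_le _), pow_zero]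
    exact one_dvd _
  | succ r IH =>
    intro w
    rw [cComp_succ]
    apply Finset.dvd_sum
    intro k hk
    rw [Finset.mem_range] at hk
    rcases Nat.eq_zero_or_pos k with rfl | hk1
    · rw [List.take_zero, List.drop_zero]
      cases r with
      | zero =>
        rw [cComp_zero, if_pos rfl, one_mul]
        simpa using hσ w (by omega)
      | succ r =>
        rw [cComp_succ]
        simp
    · have hlen1 : (w.take k).length = k := by rw [List.length_take]; omega
      have hlen2 : (w.drop k).length = w.length - k := by rw [List.length_drop]
      have h1 : (p : ℤ_[p]) ^ jn p (r * m) k ∣ cComp ε σ r (w.take k) := by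
        have := IH (w.take k)
        rwa [hlen1] at this
      have h2 : (p : ℤ_[p]) ^ jn p m (w.length - k) ∣ ε (w.drop k) σ := by
        have := hσ (w.drop k) (by rw [hlen2]; omega)
        rwa [hlen2] at this
      have hexp : jn p ((r + 1) * m) w.length ≤ jn p (r * m) k + jn p m (w.length - k) := by
        apply jn_le_s6
        have e1 : r * m ≤ k * p ^ jn p (r * m) k := jn_spec p hk1
        have e2 : m ≤ (w.length - k) * p ^ jn p m (w.length - k) := jn_spec p (by omega)
        have hp1 : 1 ≤ p := (Fact.out : p.Prime).pos
        calc (r + 1) * m = r * m + m := by ring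
        _ ≤ k * p ^ jn p (r * m) k + (w.length - k) * p ^ jn p m (w.length - k) :=
            Nat.add_le_add e1 e2
        _ ≤ k * p ^ (jn p (r * m) k + jn p m (w.length - k))
            + (w.length - k) * p ^ (jn p (r * m) k + jn p m (w.length - k)) := by
            apply Nat.add_le_add
            · exact Nat.mul_le_mul_left _ (Nat.pow_le_pow_right hp1 (by omega))
            · exact Nat.mul_le_mul_left _ (Nat.pow_le_pow_right hp1 (by omega))
        _ = (k + (w.length - k)) * p ^ (jn p (r * m) k + jn p m (w.length - k)) := by
            rw [Nat.add_mul]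
        _ = w.length * p ^ (jn p (r * m) k + jn p m (w.length - k)) := by
            congr 1; omega
      calc (p : ℤ_[p]) ^ jn p ((r + 1) * m) w.length
          ∣ (p : ℤ_[p]) ^ (jn p (r * m) k + jn p m (w.length - k)) := pow_dvd_pow _ hexp
      _ = (p : ℤ_[p]) ^ jn p (r * m) k * (p : ℤ_[p]) ^ jn p m (w.length - k) := pow_add _ _ _
      _ ∣ cComp ε σ r (w.take k) * ε (w.drop k) σ := mul_dvd_mul h1 h2

/-- The key divisibility for generators `h ^ p ^ j` with `h ∈ lcsC S i`. -/
theorem gen_dvd (hε : IsMagnus p ι ε) {n : ℕ} (h : S) (i j : ℕ) (hi : 1 ≤ i)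
    (hn : n ≤ i * p ^ j)
    (hvan : ∀ u : List X, 1 ≤ u.length → u.length < i → ε u h = 0)
    (w : List X) (hw : 1 ≤ w.length) :
    (p : ℤ_[p]) ^ jn p n w.length ∣ ε w (h ^ p ^ j) := by
  have hp : p.Prime := Fact.out
  have hσ : ∀ u : List X, 1 ≤ u.length → (p : ℤ_[p]) ^ jn p i u.length ∣ ε u h := by
    intro u hu
    by_cases hc : u.length < i
    · rw [hvan u hu hc]; exact dvd_zero _
    · rw [jn_zero_of_le (le_of_not_gt hc), pow_zero]; exact one_dvd _
  rw [eps_pow hε h (p ^ j) w]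
  apply Finset.dvd_sum
  intro r hr
  rw [Finset.mem_range] at hr
  rcases Nat.eq_zero_or_pos r with rfl | hr1
  · rw [cComp_zero, if_neg (by intro hc; rw [hc] at hw; simp at hw), mul_zero]
    exact dvd_zero _
  · have hrq : r ≤ p ^ j := by omega
    set v := padicValNat p r with hv
    have hpvr : p ^ v ≤ r := Nat.le_of_dvd hr1 pow_padicValNat_dvd
    have hvj : v ≤ j :=
      (Nat.pow_le_pow_iff_right hp.one_lt).mp (le_trans hpvr hrq)
    have hchoose : (p : ℤ_[p]) ^ (j - v) ∣ ((p ^ j).choose r : ℤ_[p]) := by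
      have hnat := pow_dvd_choose_pow p j r hr1 hrq
      have := (Nat.cast_dvd_cast hnat : ((p ^ (j - v) : ℕ) : ℤ_[p]) ∣ _)
      rwa [Nat.cast_pow] at this
    have hc := cComp_dvd hε h i hσ r w
    have hexp : jn p n w.length ≤ (j - v) + jn p (r * i) w.length := by
      apply jn_le_s6
      have h1 : r * i ≤ w.length * p ^ jn p (r * i) w.length := jn_spec p hw
      calc n ≤ i * p ^ j := hn
      _ = i * (p ^ v * p ^ (j - v)) := by
          have hj : v + (j - v) = j := by omega
          rw [← pow_add, hj]
      _ ≤ i * (r * p ^ (j - v)) :=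
          Nat.mul_le_mul_left _ (Nat.mul_le_mul_right _ hpvr)
      _ = (r * i) * p ^ (j - v) := by ring
      _ ≤ (w.length * p ^ jn p (r * i) w.length) * p ^ (j - v) :=
          Nat.mul_le_mul_right _ h1
      _ = w.length * p ^ (j - v + jn p (r * i) w.length) := by rw [pow_add]; ring
    calc (p : ℤ_[p]) ^ jn p n w.length
        ∣ (p : ℤ_[p]) ^ (j - v + jn p (r * i) w.length) := pow_dvd_pow _ hexp
    _ = (p : ℤ_[p]) ^ (j - v) * (p : ℤ_[p]) ^ jn p (r * i) w.length := pow_add _ _ _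
    _ ∣ ((p ^ j).choose r : ℤ_[p]) * cComp ε h r w := mul_dvd_mul hchoose hc

/-- The subgroup of elements whose Magnus coefficients in each degree `d ≥ 1` are divisible by
`p ^ jn p n d`. -/
def Tsub (hε : IsMagnus p ι ε) (n : ℕ) : Subgroup S where
  carrier := {σ | ∀ w : List X, 1 ≤ w.length → (p : ℤ_[p]) ^ jn p n w.length ∣ ε w σ}
  one_mem' := fun w hw => by
    rw [eps_one hε w.length w rfl hw]; exact dvd_zero _
  mul_mem' := by
    intro σ τ hσ hτ w hw
    rw [hε.mul w σ τ]
    apply Finset.dvd_sum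
    intro k hk
    rw [Finset.mem_range] at hk
    rcases Nat.eq_zero_or_pos k with rfl | hk1
    · rw [List.take_zero, List.drop_zero]
      exact (hτ w hw).mul_left _
    · have hlen : (w.take k).length = k := by rw [List.length_take]; omega
      have hdvd : (p : ℤ_[p]) ^ jn p n w.length ∣ ε (w.take k) σ := by
        have hanti : jn p n w.length ≤ jn p n k :=
          jn_anti p (a := k) (b := w.length) hk1 (by omega)
        refine dvd_trans (pow_dvd_pow _ hanti) ?_
        have := hσ (w.take k) (by omega)
        rwa [hlen] at this
      exact hdvd.mul_right _
  inv_mem' := by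
    intro σ hσ w hw
    obtain ⟨m, hm⟩ : ∃ m, w.length = m + 1 := ⟨w.length - 1, by omega⟩
    have h1 : ε w (σ * σ⁻¹) = 0 := by
      rw [mul_inv_cancel]; exact eps_one hε w.length w rfl hw
    rw [eps_mul_eq hε σ σ⁻¹ w m hm] at h1
    have h2 : ε w σ⁻¹ =
        -(ε w σ + ∑ k ∈ Finset.range m, ε (w.take (k + 1)) σ * ε (w.drop (k + 1)) σ⁻¹) := by
      rw [eq_neg_iff_add_eq_zero]
      calc ε w σ⁻¹ + (ε w σ + ∑ k ∈ Finset.range m, ε (w.take (k + 1)) σ * ε (w.drop (k + 1)) σ⁻¹)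
          = ε w σ + ε w σ⁻¹ + ∑ k ∈ Finset.range m,
            ε (w.take (k + 1)) σ * ε (w.drop (k + 1)) σ⁻¹ := by ring
      _ = 0 := h1
    rw [h2]
    rw [dvd_neg]
    apply dvd_add
    · exact hσ w hw
    · apply Finset.dvd_sum
      intro k hk
      rw [Finset.mem_range] at hk
      have hlen : (w.take (k + 1)).length = k + 1 := by rw [List.length_take]; omega
      have hdvd : (p : ℤ_[p]) ^ jn p n w.length ∣ ε (w.take (k + 1)) σ := by
        have hanti : jn p n w.length ≤ jn p n (k + 1) :=
          jn_anti p (a := k + 1) (b := w.length) (by omega) (by omega)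
        refine dvd_trans (pow_dvd_pow _ hanti) ?_
        have := hσ (w.take (k + 1)) (by omega)
        rwa [hlen] at this
      exact hdvd.mul_right _

theorem Tsub_closed (hε : IsMagnus p ι ε) (n : ℕ) :
    IsClosed ((Tsub hε n : Subgroup S) : Set S) := by
  have hdc : ∀ e : ℕ, IsClosed {x : ℤ_[p] | (p : ℤ_[p]) ^ e ∣ x} := by
    intro e
    have hset : {x : ℤ_[p] | (p : ℤ_[p]) ^ e ∣ x} = {x : ℤ_[p] | ‖x‖ ≤ (p : ℝ) ^ (-(e : ℤ))} := by
      ext x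
      rw [Set.mem_setOf_eq, Set.mem_setOf_eq, PadicInt.norm_le_pow_iff_mem_span_pow,
        Ideal.mem_span_singleton]
    rw [hset]
    exact isClosed_le continuous_norm continuous_const
  have : ((Tsub hε n : Subgroup S) : Set S) =
      ⋂ (w : List X), ⋂ (_ : 1 ≤ w.length),
        (ε w) ⁻¹' {x : ℤ_[p] | (p : ℤ_[p]) ^ jn p n w.length ∣ x} := by
    ext σ
    simp only [Set.mem_iInter, Set.mem_preimage, Set.mem_setOf_eq]
    rfl
  rw [this]
  exact isClosed_iInter fun w => isClosed_iInter fun _ =>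
    IsClosed.preimage (hε.continuous w) (hdc _)

end Aux

/-- Let `p` be a prime, `S` the free profinite group on a basis `X`, `n ≥ 1`, and let `ε` be the
family of coefficients of the continuous Magnus homomorphism `Λ : S → ℤ_p⟨⟨X⟩⟩^×`,
`Λ(ι x) = 1 + x`.  If `σ ∈ S_{(n,p)}`, then for every word `w` of length `i ≥ 1` the Magnus
coefficient `ε_w(σ)` lies in `p^{j_n(i)} ℤ_p`. -/
theorem stmt_6 {X S : Type*} [DecidableEq X] [Group S] [TopologicalSpace S] [IsTopologicalGroup S]
    (p n : ℕ) [Fact p.Prime] (hn : 1 ≤ n) (ι : X → S) (hfree : IsFreeProfinite X S ι)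
    (ε : List X → S → ℤ_[p]) (hε : IsMagnus p ι ε)
    (σ : S) (hσ : σ ∈ Zas p n S) (w : List X) (hw : 1 ≤ w.length) :
    (p : ℤ_[p]) ^ jn p n w.length ∣ ε w σ := by
  have hkey : Zas p n S ≤ Tsub hε n := by
    unfold Zas closedClosure
    apply Subgroup.topologicalClosure_minimal
    · rw [Subgroup.closure_le]
      rintro g ⟨i, j, hi, hij, h, hh, rfl⟩
      intro u hu
      exact gen_dvd hε h i j hi hij
        (fun u' hu' hlt' => vanish_lcsC hε i h hh u' hu' hlt') u hu
    · exact Tsub_closed hε n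
  exact hkey hσ w hw
end

section
/- Let p be a prime and let t ≥ 1, j ≥ 0, j' ≥ 1 be integers with 1 ≤ t ≤ p^{j'}. The following are equivalent: (a) p^j divides the binomial coefficient C(p^{j'}, l) for every l = 1, 2, …, t; (b) p^j divides C(p^{j'}, p^{⌊log_p t⌋}); (c) j' ≥ j + ⌊log_p t⌋. -/
/-!
By Kummer's theorem, `v_p (C(p^n, k)) = n - v_p k` for `0 < k ≤ p^n`. Since `v_p l ≤ log_p l ≤ log_p t`
for `l ≤ t`, with equality at `l = p ^ log_p t`, the binomial coefficient with the least `p`-adic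
valuation among `l = 1, …, t` is the one at `l = p ^ log_p t`.
-/

namespace Nat

variable {p n j k : ℕ}

theorem factorization_le_log (hp : p.Prime) (k : ℕ) : k.factorization p ≤ log p k := by
  rw [factorization_def k hp]
  exact padicValNat_le_nat_log k

theorem pow_dvd_choose_prime_pow_iff (hp : p.Prime) (hk0 : k ≠ 0) (hkn : k ≤ p ^ n) :
    p ^ j ∣ choose (p ^ n) k ↔ j + k.factorization p ≤ n := by
  have hkummer := factorization_choose_prime_pow_add_factorization hp hkn hk0
  rw [hp.pow_dvd_iff_le_factorization (choose_pos hkn).ne']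
  omega

theorem pow_dvd_choose_prime_pow_prime_pow_iff (hp : p.Prime) {m : ℕ} (hmn : m ≤ n) :
    p ^ j ∣ choose (p ^ n) (p ^ m) ↔ j + m ≤ n := by
  rw [pow_dvd_choose_prime_pow_iff hp (pow_ne_zero m hp.ne_zero)
    (pow_le_pow_right₀ hp.one_le hmn), factorization_pow_self hp]

end Nat

theorem stmt_8_general {p t j j' : ℕ} (hp : p.Prime) (ht : 1 ≤ t)
    (htp : t ≤ p ^ j') :
    ((∀ l : ℕ, 1 ≤ l → l ≤ t → p ^ j ∣ Nat.choose (p ^ j') l) ↔ j + Nat.log p t ≤ j') ∧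
      ((p ^ j ∣ Nat.choose (p ^ j') (p ^ Nat.log p t)) ↔ j + Nat.log p t ≤ j') := by
  set L := Nat.log p t
  have hpL : p ^ L ≤ t := Nat.pow_log_le_self p (by omega)
  have hLj' : L ≤ j' := by
    simpa only [Nat.log_pow hp.one_lt] using Nat.log_mono_right (b := p) htp
  have hb := Nat.pow_dvd_choose_prime_pow_prime_pow_iff (j := j) hp hLj'
  refine ⟨⟨fun h => hb.1 (h _ (Nat.one_le_pow _ _ hp.pos) hpL), fun h l hl hlt => ?_⟩, hb⟩
  have hvl : l.factorization p ≤ L :=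
    (Nat.factorization_le_log hp l).trans (Nat.log_mono_right hlt)
  rw [Nat.pow_dvd_choose_prime_pow_iff hp (by omega) (hlt.trans htp)]
  omega

/-- Let `p` be a prime and `t ≥ 1`, `j ≥ 0`, `j' ≥ 1` integers with `t ≤ p ^ j'`.  The following
are equivalent: (a) `p ^ j` divides `C(p ^ j', l)` for every `l = 1, …, t`;
(b) `p ^ j` divides `C(p ^ j', p ^ ⌊log_p t⌋)`; (c) `j' ≥ j + ⌊log_p t⌋`.
(Stated as the conjunction of the equivalences (a) ↔ (c) and (b) ↔ (c).) -/
theorem stmt_8 {p t j j' : ℕ} (hp : p.Prime) (ht : 1 ≤ t) (hj' : 1 ≤ j')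
    (htp : t ≤ p ^ j') :
    ((∀ l : ℕ, 1 ≤ l → l ≤ t → p ^ j ∣ Nat.choose (p ^ j') l) ↔ j + Nat.log p t ≤ j') ∧
      ((p ^ j ∣ Nat.choose (p ^ j') (p ^ Nat.log p t)) ↔ j + Nat.log p t ≤ j') :=
  stmt_8_general hp ht htp
end

section
/- Let p be a prime, i ≥ 1, j ≥ 0, and let U = U_i(Z/p^{j+1}) be the group of unitriangular (i+1)×(i+1) matrices over Z/p^{j+1}. For 1 ≤ i' ≤ i let U^{(i')} be the subgroup of U consisting of matrices that vanish on the first i'−1 diagonals above the main diagonal, and let j' ≥ 0. Then: (b) (U^{(i')})^{p^{j'}} = I + p^j·(Z/p^{j+1})·E_{1,i+1} if and only if j' ≥ j and i = i'·p^{j'−j}; and (c) (U^{(i')})^{p^{j'}} ⊆ I + p^j·(Z/p^{j+1})·E_{1,i+1} if and only if i'·p^{j'} ≥ i·p^{j}. -/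
variable (R : Type*) [CommRing R] (m : ℕ)

/-- A square matrix is unitriangular if it is upper triangular with all diagonal entries `1`. -/
def IsUnitriangular (M : Matrix (Fin m) (Fin m) R) : Prop :=
  (∀ k, M k k = 1) ∧ ∀ k l : Fin m, l < k → M k l = 0

/-- The group of unitriangular `m × m` matrices over `R`, as a subgroup of the units of the
matrix ring. -/
def UT : Subgroup (Matrix (Fin m) (Fin m) R)ˣ where
  carrier := {M | IsUnitriangular R m (M : Matrix (Fin m) (Fin m) R)}
  one_mem' := by
    constructor
    · intro k; simp [Matrix.one_apply]
    · intro k l h; simp [Matrix.one_apply, (ne_of_lt h).symm]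
  mul_mem' := by
    rintro A B ⟨hA1, hA2⟩ ⟨hB1, hB2⟩
    constructor
    · intro k
      rw [Units.val_mul, Matrix.mul_apply]
      rw [Finset.sum_eq_single k]
      · rw [hA1, hB1, one_mul]
      · intro j _ hj
        rcases lt_or_gt_of_ne hj with h | h
        · rw [hA2 _ _ h, zero_mul]
        · rw [hB2 _ _ h, mul_zero]
      · intro h; exact absurd (Finset.mem_univ k) h
    · intro k l hlk
      rw [Units.val_mul, Matrix.mul_apply]
      apply Finset.sum_eq_zero
      intro j _
      rcases lt_or_ge (j : Fin m) k with h | h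
      · rw [hA2 _ _ h, zero_mul]
      · rw [hB2 _ _ (lt_of_lt_of_le hlk h), mul_zero]
  inv_mem' := by
    rintro A ⟨hA1, hA2⟩
    have hcoe : ((A⁻¹ : (Matrix (Fin m) (Fin m) R)ˣ) : Matrix (Fin m) (Fin m) R) =
        ((A : Matrix (Fin m) (Fin m) R))⁻¹ := Matrix.coe_units_inv A
    haveI : Invertible (A : Matrix (Fin m) (Fin m) R) := A.invertible
    have hBT : Matrix.BlockTriangular (A : Matrix (Fin m) (Fin m) R) id :=
      fun k l h => hA2 k l h
    have hBTinv : Matrix.BlockTriangular ((A : Matrix (Fin m) (Fin m) R))⁻¹ id :=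
      Matrix.blockTriangular_inv_of_blockTriangular hBT
    constructor
    · intro k
      have hmul := congrFun (congrFun
        (Matrix.mul_inv_of_invertible (A : Matrix (Fin m) (Fin m) R)) k) k
      rw [Matrix.mul_apply] at hmul
      rw [Finset.sum_eq_single k] at hmul
      · rw [hA1] at hmul
        rw [hcoe]
        simpa using hmul
      · intro j _ hj
        rcases lt_or_gt_of_ne hj with h | h
        · rw [hA2 _ _ h, zero_mul]
        · rw [hBTinv (show id k < id j from h), mul_zero]
      · intro hmem; exact absurd (Finset.mem_univ k) hmem
    · intro k l h
      rw [hcoe]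
      exact hBTinv h

/-- The subgroup `U^{(i')}` of the unitriangular group, consisting of the matrices whose entries
on the first `i' - 1` diagonals above the main diagonal all vanish. -/
def UTk (i' : ℕ) : Subgroup ↥(UT R m) where
  carrier := {M | ∀ k l : Fin m, (k : ℕ) < l → (l : ℕ) < k + i' →
    ((M : (Matrix (Fin m) (Fin m) R)ˣ) : Matrix (Fin m) (Fin m) R) k l = 0}
  one_mem' := by
    intro k l h1 h2
    have hkl : k ≠ l := fun h => by simp [h] at h1
    simp [Matrix.one_apply, hkl]
  mul_mem' := by
    rintro A B hA hB k l hkl hli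
    have hAut := A.2
    have hBut := B.2
    show ((↑A * ↑B : (Matrix (Fin m) (Fin m) R)ˣ) : Matrix (Fin m) (Fin m) R) k l = 0
    rw [Units.val_mul, Matrix.mul_apply]
    apply Finset.sum_eq_zero
    intro j _
    rcases lt_trichotomy (j : ℕ) (k : ℕ) with h | h | h
    · rw [hAut.2 k j (Fin.lt_def.mpr h), zero_mul]
    · have hj : j = k := Fin.ext h
      subst hj
      rw [hB j l hkl hli, mul_zero]
    · rcases lt_or_ge (l : ℕ) (j : ℕ) with h' | h'
      · rw [hBut.2 j l (Fin.lt_def.mpr h'), mul_zero]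
      · rw [hA k j h (lt_of_le_of_lt h' hli), zero_mul]
  inv_mem' := by
    rintro A hA k l hkl hli
    have hAut := A.2
    have hinv := (A⁻¹).2
    have hone : ((↑A : (Matrix (Fin m) (Fin m) R)ˣ) : Matrix (Fin m) (Fin m) R) *
        ((↑A⁻¹ : (Matrix (Fin m) (Fin m) R)ˣ) : Matrix (Fin m) (Fin m) R) = 1 := by
      rw [← Units.val_mul]
      norm_cast
      rw [mul_inv_cancel]
      rfl
    have hentry := congrFun (congrFun hone k) l
    rw [Matrix.mul_apply] at hentry
    rw [Finset.sum_eq_single k] at hentry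
    · have hkl' : k ≠ l := fun h => by simp [h] at hkl
      rw [hAut.1] at hentry
      rw [Matrix.one_apply_ne hkl'] at hentry
      simpa using hentry
    · intro j _ hj
      rcases lt_trichotomy (j : ℕ) (k : ℕ) with h | h | h
      · rw [hAut.2 k j (Fin.lt_def.mpr h), zero_mul]
      · exact absurd (Fin.ext h) hj
      · rcases lt_or_ge (j : ℕ) ((k : ℕ) + i') with h' | h'
        · rw [hA k j h h', zero_mul]
        · rw [hinv.2 j l (Fin.lt_def.mpr (lt_of_lt_of_le hli h')), mul_zero]
    · intro hmem; exact absurd (Finset.mem_univ k) hmem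

/-- The subgroup generated by the `q`-th powers of the elements of a subgroup. -/
def pPow {G : Type*} [Group G] (K : Subgroup G) (q : ℕ) : Subgroup G :=
  Subgroup.closure {x | ∃ y ∈ K, x = y ^ q}

/-- An auxiliary product identity for corner matrices. -/

theorem corner_mul (p j i : ℕ) (R : Type*) [CommRing R] (hi : 0 < i) (a b : R) :
    (1 + Matrix.single (0 : Fin (i+1)) (Fin.last i) ((p : R) ^ j * a)) *
      (1 + Matrix.single (0 : Fin (i+1)) (Fin.last i) ((p : R) ^ j * b)) =
    1 + Matrix.single (0 : Fin (i+1)) (Fin.last i) ((p : R) ^ j * (a + b)) := by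
  have hne : Fin.last i ≠ (0 : Fin (i+1)) := by simp [Fin.ext_iff, Fin.last]; omega
  rw [mul_add, add_mul, add_mul, one_mul, mul_one, one_mul,
    Matrix.single_mul_single_of_ne (h := hne), mul_add, Matrix.single_add]
  abel


/-- The subgroup `I + p^j (ℤ/p^{j+1}) E_{1,i+1}` of the unitriangular `(i+1) × (i+1)` matrices
over `ℤ/p^{j+1}`: matrices differing from the identity only at the upper-right corner entry,
by a multiple of `p^j`. -/
def cornerSub (p j i : ℕ) : Subgroup ↥(UT (ZMod (p ^ (j + 1))) (i + 1)) where
  carrier := {M | ∃ a : ZMod (p ^ (j + 1)),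
    ((M : (Matrix (Fin (i + 1)) (Fin (i + 1)) (ZMod (p ^ (j + 1))))ˣ) :
        Matrix (Fin (i + 1)) (Fin (i + 1)) (ZMod (p ^ (j + 1)))) =
      1 + Matrix.single 0 (Fin.last i) ((p : ZMod (p ^ (j + 1))) ^ j * a)}
  one_mem' := ⟨0, by simp⟩
  mul_mem' := by
    rintro A B ⟨a, ha⟩ ⟨b, hb⟩
    refine ⟨a + b, ?_⟩
    have hAB : ((↑(A * B) : (Matrix (Fin (i + 1)) (Fin (i + 1)) (ZMod (p ^ (j + 1))))ˣ) :
        Matrix (Fin (i + 1)) (Fin (i + 1)) (ZMod (p ^ (j + 1)))) =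
        ((↑A : (Matrix (Fin (i + 1)) (Fin (i + 1)) (ZMod (p ^ (j + 1))))ˣ) :
          Matrix (Fin (i + 1)) (Fin (i + 1)) (ZMod (p ^ (j + 1)))) *
        ((↑B : (Matrix (Fin (i + 1)) (Fin (i + 1)) (ZMod (p ^ (j + 1))))ˣ) :
          Matrix (Fin (i + 1)) (Fin (i + 1)) (ZMod (p ^ (j + 1)))) := rfl
    rw [hAB, ha, hb]
    rcases Nat.eq_zero_or_pos i with hi | hi
    · subst hi
      have hca : (p : ZMod (p ^ (j + 1))) ^ j * a = 0 := by
        have hd := A.2.1 0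
        rw [ha] at hd
        simpa [Matrix.add_apply, Matrix.one_apply, Fin.last] using hd
      have hcb : (p : ZMod (p ^ (j + 1))) ^ j * b = 0 := by
        have hd := B.2.1 0
        rw [hb] at hd
        simpa [Matrix.add_apply, Matrix.one_apply, Fin.last] using hd
      simp [mul_add, hca, hcb]
    · exact corner_mul p j i _ hi a b
  inv_mem' := by
    rintro A ⟨a, ha⟩
    refine ⟨-a, ?_⟩
    have key : ((↑A : (Matrix (Fin (i + 1)) (Fin (i + 1)) (ZMod (p ^ (j + 1))))ˣ) :
        Matrix (Fin (i + 1)) (Fin (i + 1)) (ZMod (p ^ (j + 1)))) *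
        (1 + Matrix.single 0 (Fin.last i) ((p : ZMod (p ^ (j + 1))) ^ j * (-a))) =
        1 := by
      rcases Nat.eq_zero_or_pos i with hi | hi
      · subst hi
        have hca : (p : ZMod (p ^ (j + 1))) ^ j * a = 0 := by
          have hd := A.2.1 0
          rw [ha] at hd
          simpa [Matrix.add_apply, Matrix.one_apply, Fin.last] using hd
        have hca' : (p : ZMod (p ^ (j + 1))) ^ j * (-a) = 0 := by
          rw [mul_neg, hca, neg_zero]
        rw [ha, hca, hca']
        simp
      · rw [ha, corner_mul p j i _ hi a (-a)]
        simp
    calc ((↑A⁻¹ : (Matrix (Fin (i + 1)) (Fin (i + 1)) (ZMod (p ^ (j + 1))))ˣ) :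
          Matrix (Fin (i + 1)) (Fin (i + 1)) (ZMod (p ^ (j + 1)))) =
        ((↑A⁻¹ : (Matrix (Fin (i + 1)) (Fin (i + 1)) (ZMod (p ^ (j + 1))))ˣ) :
          Matrix (Fin (i + 1)) (Fin (i + 1)) (ZMod (p ^ (j + 1)))) * 1 := (mul_one _).symm
      _ = ((↑A⁻¹ : (Matrix (Fin (i + 1)) (Fin (i + 1)) (ZMod (p ^ (j + 1))))ˣ) :
          Matrix (Fin (i + 1)) (Fin (i + 1)) (ZMod (p ^ (j + 1)))) *
          (((↑A : (Matrix (Fin (i + 1)) (Fin (i + 1)) (ZMod (p ^ (j + 1))))ˣ) :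
            Matrix (Fin (i + 1)) (Fin (i + 1)) (ZMod (p ^ (j + 1)))) *
          (1 + Matrix.single 0 (Fin.last i)
            ((p : ZMod (p ^ (j + 1))) ^ j * (-a)))) := by rw [key]
      _ = 1 + Matrix.single 0 (Fin.last i)
            ((p : ZMod (p ^ (j + 1))) ^ j * (-a)) := by
          rw [← mul_assoc, ← Units.val_mul]
          norm_cast
          rw [inv_mul_cancel]
          simp

/-! Write an element of `U^{(i')}` as `1 + N`, where `N` vanishes below the `i'`-th superdiagonal,
so that `N ^ k` vanishes below the `k i'`-th one. By the binomial theorem the `(a, b)` entry of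
`(1 + N) ^ p^j'` is `∑ k, C(p^j', k) (N ^ k) a b`, and `v_p C(p^j', k) = j' - v_p k`. Modulo
`p^(j+1)` only the terms with `k ≥ p^(j'-j)` survive, so `p^j'`-th powers are trivial below the
superdiagonal `i' p^(j'-j)` and divisible by `p^j` on it. For the shift element `1 + S` (ones on the
`i'`-th superdiagonal) the `(0, k i')` entry of its `p^j'`-th power is exactly `C(p^j', k)`, which
shows that these bounds are sharp; when `i = i' p^(j'-j)` that power is `1 + p^j u E_{1,i+1}` with
`u` a unit, and it generates the corner subgroup. -/

section Unitriangular

variable {S : Type*} [CommRing S] {n : ℕ}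

lemma isUnitriangular_one_add {N : Matrix (Fin n) (Fin n) S} (hN : ∀ a b, b ≤ a → N a b = 0) :
    IsUnitriangular S n (1 + N) :=
  ⟨fun a => by simp [hN a a le_rfl],
    fun a b hba => by simp [hN a b hba.le, Matrix.one_apply_ne' hba.ne]⟩

lemma IsUnitriangular.isUnit {M : Matrix (Fin n) (Fin n) S} (hM : IsUnitriangular S n M) :
    IsUnit M := by
  rw [Matrix.isUnit_iff_isUnit_det, Matrix.det_of_isUpperTriangular (fun a b h => hM.2 a b h)]
  simp [hM.1]

noncomputable def UT.ofMatrix {M : Matrix (Fin n) (Fin n) S} (hM : IsUnitriangular S n M) :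
    UT S n :=
  ⟨hM.isUnit.unit, show IsUnitriangular S n _ by rw [hM.isUnit.unit_spec]; exact hM⟩

@[simp] lemma UT.coe_ofMatrix {M : Matrix (Fin n) (Fin n) S} (hM : IsUnitriangular S n M) :
    ((UT.ofMatrix hM).1 : Matrix (Fin n) (Fin n) S) = M :=
  hM.isUnit.unit_spec

@[simp] lemma UT.coe_pow (x : UT S n) (q : ℕ) :
    ((x ^ q).1 : Matrix (Fin n) (Fin n) S) = (x.1 : Matrix (Fin n) (Fin n) S) ^ q := by
  rw [SubgroupClass.coe_pow, Units.val_pow_eq_pow_val]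

end Unitriangular

section Band

variable {S : Type*} [CommRing S] {n : ℕ}

lemma pow_apply_eq_zero_of_lt {N : Matrix (Fin n) (Fin n) S} {d : ℕ}
    (hN : ∀ a b : Fin n, (b : ℕ) < a + d → N a b = 0) (k : ℕ) {a b : Fin n}
    (hab : (b : ℕ) < a + k * d) : (N ^ k) a b = 0 := by
  induction k generalizing b with
  | zero => exact Matrix.one_apply_ne' (Fin.ne_of_val_ne (by omega))
  | succ k ih =>
    rw [pow_succ, Matrix.mul_apply]
    refine Finset.sum_eq_zero fun c _ => ?_
    rcases lt_or_ge (c : ℕ) (a + k * d) with hc | hc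
    · rw [ih hc, zero_mul]
    · rw [hN c b (by rw [add_mul] at hab; omega), mul_zero]

lemma one_add_pow_apply (N : Matrix (Fin n) (Fin n) S) (q : ℕ) (a b : Fin n) :
    ((1 + N) ^ q) a b = ∑ k ∈ Finset.range (q + 1), (q.choose k : S) * (N ^ k) a b := by
  rw [add_comm, (Commute.one_right N).add_pow, Matrix.sum_apply]
  refine Finset.sum_congr rfl fun k _ => ?_
  rw [one_pow, mul_one, ← Nat.cast_comm, ← nsmul_eq_mul, Matrix.smul_apply, nsmul_eq_mul]

variable (S n) in
def shiftMatrix (d : ℕ) : Matrix (Fin n) (Fin n) S :=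
  Matrix.of fun a b => if (b : ℕ) = a + d then 1 else 0

lemma shiftMatrix_apply_eq_zero {d : ℕ} {a b : Fin n} (h : (b : ℕ) ≠ a + d) :
    shiftMatrix S n d a b = 0 :=
  if_neg h

lemma shiftMatrix_mul (d e : ℕ) :
    shiftMatrix S n d * shiftMatrix S n e = shiftMatrix S n (d + e) := by
  ext a b
  rw [Matrix.mul_apply]
  by_cases had : (a : ℕ) + d < n
  · rw [Finset.sum_eq_single ⟨a + d, had⟩]
    · simp [shiftMatrix, add_assoc]
    · intro c _ hc
      rw [shiftMatrix_apply_eq_zero (fun h => hc (Fin.ext h)), zero_mul]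
    · simp
  · rw [Finset.sum_eq_zero, shiftMatrix_apply_eq_zero (by omega)]
    intro c _
    rw [shiftMatrix_apply_eq_zero (by omega), zero_mul]

lemma shiftMatrix_pow (d k : ℕ) : shiftMatrix S n d ^ k = shiftMatrix S n (k * d) := by
  induction k with
  | zero => ext a b; simp [shiftMatrix, Matrix.one_apply, Fin.ext_iff, eq_comm]
  | succ k ih => rw [pow_succ, ih, shiftMatrix_mul, add_one_mul]

lemma one_add_shiftMatrix_pow_apply {d : ℕ} (hd : 0 < d) (q k : ℕ) {a b : Fin n}
    (hab : (b : ℕ) = a + k * d) : ((1 + shiftMatrix S n d) ^ q) a b = q.choose k := by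
  have hk (m : ℕ) : (b : ℕ) = a + m * d ↔ k = m := by
    rw [hab, Nat.add_left_cancel_iff, Nat.mul_left_inj hd.ne', eq_comm]
  rw [one_add_pow_apply]
  simp_rw [shiftMatrix_pow]
  simp only [shiftMatrix, Matrix.of_apply, hk, mul_ite, mul_one, mul_zero, Finset.sum_ite_eq,
    Finset.mem_range]
  split_ifs with hkq
  · rfl
  · rw [Nat.choose_eq_zero_of_lt (by omega), Nat.cast_zero]

lemma isUnitriangular_one_add_shiftMatrix {d : ℕ} (hd : 0 < d) :
    IsUnitriangular S n (1 + shiftMatrix S n d) :=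
  isUnitriangular_one_add fun _ _ h => shiftMatrix_apply_eq_zero (by omega)

end Band

namespace Nat.Prime

variable {p : ℕ}

lemma pow_dvd_choose_pow_iff (hp : p.Prime) {n k e : ℕ} (hk0 : k ≠ 0) (hkn : k ≤ p ^ n) :
    p ^ e ∣ (p ^ n).choose k ↔ e + k.factorization p ≤ n := by
  rw [hp.pow_dvd_iff_le_factorization (Nat.choose_pos hkn).ne',
    Nat.factorization_choose_prime_pow hp hkn hk0]
  have := Nat.factorization_le_of_le_pow hkn
  omega

lemma pow_succ_dvd_choose_pow (hp : p.Prime) {j j' k : ℕ} (hk0 : 0 < k) (hk : k < p ^ (j' - j)) :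
    p ^ (j + 1) ∣ (p ^ j').choose k := by
  have hkn : k ≤ p ^ j' := hk.le.trans (Nat.pow_le_pow_right hp.pos (Nat.sub_le _ _))
  have hfac : k.factorization p < j' - j :=
    (Nat.pow_lt_pow_iff_right hp.one_lt).1 ((Nat.ordProj_le p hk0.ne').trans_lt hk)
  rw [hp.pow_dvd_choose_pow_iff hk0.ne' hkn]
  omega

lemma pow_dvd_choose_pow (hp : p.Prime) {j j' k : ℕ} (hj : j ≤ j') (hk0 : 0 < k)
    (hk : k ≤ p ^ (j' - j)) : p ^ j ∣ (p ^ j').choose k := by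
  have hkn : k ≤ p ^ j' := hk.trans (Nat.pow_le_pow_right hp.pos (Nat.sub_le _ _))
  have := Nat.factorization_le_of_le_pow hk
  rw [hp.pow_dvd_choose_pow_iff hk0.ne' hkn]
  omega

lemma not_pow_succ_dvd_choose_pow (hp : p.Prime) {j j' : ℕ} (hj : j ≤ j') :
    ¬ p ^ (j + 1) ∣ (p ^ j').choose (p ^ (j' - j)) := by
  rw [hp.pow_dvd_choose_pow_iff (pow_pos hp.pos _).ne' (Nat.pow_le_pow_right hp.pos (by omega)),
    Nat.factorization_pow_self hp]
  omega

end Nat.Prime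

lemma Nat.mul_pow_le_mul_pow_iff {p i i' j j' : ℕ} (hp : 1 < p) (hi' : 0 < i') (hii' : i' ≤ i) :
    i * p ^ j ≤ i' * p ^ j' ↔ j ≤ j' ∧ i ≤ i' * p ^ (j' - j) := by
  constructor
  · intro h
    have hj : j ≤ j' := (Nat.pow_le_pow_iff_right hp).1 <|
      Nat.le_of_mul_le_mul_left ((Nat.mul_le_mul_right _ hii').trans h) hi'
    refine ⟨hj, Nat.le_of_mul_le_mul_right ?_ (pow_pos (by omega : 0 < p) j)⟩
    rwa [mul_assoc, ← pow_add, Nat.sub_add_cancel hj]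
  · rintro ⟨hj, h⟩
    calc i * p ^ j ≤ i' * p ^ (j' - j) * p ^ j := Nat.mul_le_mul_right _ h
      _ = i' * p ^ j' := by rw [mul_assoc, ← pow_add, Nat.sub_add_cancel hj]

lemma ZMod.dvd_of_natCast_dvd_natCast {m M a : ℕ} (hm : m ∣ M)
    (h : (m : ZMod M) ∣ (a : ZMod M)) : m ∣ a := by
  have := map_dvd (ZMod.castHom hm (ZMod m)) h
  rwa [map_natCast, map_natCast, ZMod.natCast_self, zero_dvd_iff, ZMod.natCast_eq_zero_iff] at this

section LowerCentral

variable {S : Type*} [CommRing S] {n d : ℕ}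

lemma exists_eq_one_add_of_mem_UTk {y : UT S n} (hy : y ∈ UTk S n d) :
    ∃ N : Matrix (Fin n) (Fin n) S, (y.1 : Matrix (Fin n) (Fin n) S) = 1 + N ∧
      ∀ a b : Fin n, (b : ℕ) < a + d → N a b = 0 := by
  refine ⟨y.1 - 1, (add_sub_cancel _ _).symm, fun a b hab => ?_⟩
  rw [Matrix.sub_apply]
  rcases lt_trichotomy b a with hba | rfl | hab'
  · rw [y.2.2 a b hba, Matrix.one_apply_ne' hba.ne, sub_zero]
  · rw [y.2.1, Matrix.one_apply_eq, sub_self]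
  · rw [hy a b hab' hab, Matrix.one_apply_ne hab'.ne, sub_zero]

noncomputable def shiftUT (hd : 0 < d) : UT S n :=
  UT.ofMatrix (isUnitriangular_one_add_shiftMatrix (S := S) (n := n) hd)

lemma shiftUT_mem_UTk (hd : 0 < d) : shiftUT (S := S) (n := n) hd ∈ UTk S n d := by
  intro a b _ hab
  rw [shiftUT, UT.coe_ofMatrix, Matrix.add_apply, shiftMatrix_apply_eq_zero (by omega),
    Matrix.one_apply_ne (Fin.ne_of_lt ‹_›), add_zero]

lemma shiftUT_pow_apply (hd : 0 < d) (q k : ℕ) {a b : Fin n} (hab : (b : ℕ) = a + k * d) :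
    (((shiftUT (S := S) (n := n) hd) ^ q).1 : Matrix (Fin n) (Fin n) S) a b = q.choose k := by
  rw [UT.coe_pow, shiftUT, UT.coe_ofMatrix, one_add_shiftMatrix_pow_apply hd q k hab]

end LowerCentral

section PrimePower

variable {p j j' n d : ℕ} {N : Matrix (Fin n) (Fin n) (ZMod (p ^ (j + 1)))}

lemma choose_mul_pow_apply_eq_zero (hp : p.Prime)
    (hN : ∀ a b : Fin n, (b : ℕ) < a + d → N a b = 0) {k : ℕ} (hk : 0 < k) {a b : Fin n}
    (hab : (b : ℕ) < a + d * p ^ (j' - j)) :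
    ((p ^ j').choose k : ZMod (p ^ (j + 1))) * (N ^ k) a b = 0 := by
  by_cases hb : (b : ℕ) < a + k * d
  · rw [pow_apply_eq_zero_of_lt hN k hb, mul_zero]
  · have hkp : k < p ^ (j' - j) := Nat.lt_of_mul_lt_mul_left (a := d) (by nlinarith)
    rw [(ZMod.natCast_eq_zero_iff _ _).2 (hp.pow_succ_dvd_choose_pow hk hkp), zero_mul]

lemma dvd_choose_mul_pow_apply (hp : p.Prime) (hj : j ≤ j') (hd : 0 < d)
    (hN : ∀ a b : Fin n, (b : ℕ) < a + d → N a b = 0) {k : ℕ} (hk : 0 < k) {a b : Fin n}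
    (hab : (b : ℕ) ≤ a + d * p ^ (j' - j)) :
    (p : ZMod (p ^ (j + 1))) ^ j ∣ ((p ^ j').choose k : ZMod (p ^ (j + 1))) * (N ^ k) a b := by
  by_cases hb : (b : ℕ) < a + k * d
  · rw [pow_apply_eq_zero_of_lt hN k hb, mul_zero]
    exact dvd_zero _
  · have hkp : k ≤ p ^ (j' - j) := Nat.le_of_mul_le_mul_left (by nlinarith) hd
    have := Nat.cast_dvd_cast (α := ZMod (p ^ (j + 1))) (hp.pow_dvd_choose_pow hj hk hkp)
    rw [Nat.cast_pow] at this
    exact this.mul_right _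

lemma one_add_pow_apply_eq_one_apply (hp : p.Prime)
    (hN : ∀ a b : Fin n, (b : ℕ) < a + d → N a b = 0) {a b : Fin n}
    (hab : (b : ℕ) < a + d * p ^ (j' - j)) :
    ((1 + N) ^ p ^ j') a b = (1 : Matrix (Fin n) (Fin n) (ZMod (p ^ (j + 1)))) a b := by
  rw [one_add_pow_apply, Finset.sum_range_succ', Finset.sum_eq_zero, zero_add, pow_zero,
    Nat.choose_zero_right, Nat.cast_one, one_mul]
  exact fun k _ => choose_mul_pow_apply_eq_zero hp hN k.succ_pos hab

lemma dvd_one_add_pow_apply (hp : p.Prime) (hj : j ≤ j') (hd : 0 < d)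
    (hN : ∀ a b : Fin n, (b : ℕ) < a + d → N a b = 0) {a b : Fin n} (hne : a ≠ b)
    (hab : (b : ℕ) ≤ a + d * p ^ (j' - j)) :
    (p : ZMod (p ^ (j + 1))) ^ j ∣ ((1 + N) ^ p ^ j') a b := by
  rw [one_add_pow_apply, Finset.sum_range_succ', pow_zero, Matrix.one_apply_ne hne, mul_zero,
    add_zero]
  exact Finset.dvd_sum fun k _ => dvd_choose_mul_pow_apply hp hj hd hN k.succ_pos hab

end PrimePower

section Corner

variable {p i j : ℕ}

local notation "Mat" => Matrix (Fin (i + 1)) (Fin (i + 1)) (ZMod (p ^ (j + 1)))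

lemma Fin.last_ne_zero_of_pos (hi : 0 < i) : Fin.last i ≠ 0 :=
  Fin.ne_of_val_ne (by simpa using hi.ne')

lemma mem_cornerSub_iff (hi : 0 < i) {M : UT (ZMod (p ^ (j + 1))) (i + 1)} :
    M ∈ cornerSub p j i ↔
      (∀ a b, ¬(a = 0 ∧ b = Fin.last i) → (M.1 : Mat) a b = (1 : Mat) a b) ∧
        (p : ZMod (p ^ (j + 1))) ^ j ∣ (M.1 : Mat) 0 (Fin.last i) := by
  constructor
  · rintro ⟨c, hc⟩
    refine ⟨fun a b hab => ?_, ⟨c, ?_⟩⟩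
    · rw [hc, Matrix.add_apply, Matrix.single_apply_of_ne _ _ _ _ _ (by tauto), add_zero]
    · rw [hc, Matrix.add_apply, Matrix.one_apply_ne' (Fin.last_ne_zero_of_pos hi), zero_add,
        Matrix.single_apply_same]
  · rintro ⟨hoff, c, hc⟩
    refine ⟨c, Matrix.ext fun a b => ?_⟩
    by_cases hab : a = 0 ∧ b = Fin.last i
    · obtain ⟨rfl, rfl⟩ := hab
      rw [hc, Matrix.add_apply, Matrix.one_apply_ne' (Fin.last_ne_zero_of_pos hi), zero_add,
        Matrix.single_apply_same]
    · rw [hoff a b hab, Matrix.add_apply, Matrix.single_apply_of_ne _ _ _ _ _ (by tauto),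
        add_zero]

lemma coe_eq_one_add_single_of_mem_cornerSub (hi : 0 < i) {M : UT (ZMod (p ^ (j + 1))) (i + 1)}
    (hM : M ∈ cornerSub p j i) :
    (M.1 : Mat) = 1 + Matrix.single 0 (Fin.last i) ((M.1 : Mat) 0 (Fin.last i)) := by
  obtain ⟨c, hc⟩ := hM
  rw [hc, Matrix.add_apply, Matrix.one_apply_ne' (Fin.last_ne_zero_of_pos hi), zero_add,
    Matrix.single_apply_same]

lemma dvd_apply_of_mem_cornerSub (hi : 0 < i) {M : UT (ZMod (p ^ (j + 1))) (i + 1)}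
    (hM : M ∈ cornerSub p j i) {b : Fin (i + 1)} (hb : b ≠ 0) :
    (p : ZMod (p ^ (j + 1))) ^ j ∣ (M.1 : Mat) 0 b := by
  rw [mem_cornerSub_iff hi] at hM
  by_cases hbl : b = Fin.last i
  · exact hbl ▸ hM.2
  · rw [hM.1 0 b (by tauto), Matrix.one_apply_ne' hb]
    exact dvd_zero _

lemma one_add_single_pow {R : Type*} [CommRing R] (hi : 0 < i) (c : R) (k : ℕ) :
    (1 + Matrix.single (0 : Fin (i + 1)) (Fin.last i) ((p : R) ^ j * c)) ^ k =
      1 + Matrix.single (0 : Fin (i + 1)) (Fin.last i) ((p : R) ^ j * (k * c)) := by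
  induction k with
  | zero => simp
  | succ k ih => rw [pow_succ, ih, corner_mul p j i R hi, Nat.cast_succ, add_one_mul]

lemma cornerSub_ne_bot (hp : p.Prime) (hi : 0 < i) : cornerSub p j i ≠ ⊥ := by
  set R := ZMod (p ^ (j + 1))
  have hU : IsUnitriangular R (i + 1) (1 + Matrix.single 0 (Fin.last i) ((p : R) ^ j * 1)) :=
    isUnitriangular_one_add fun a b hba => Matrix.single_apply_of_ne _ _ _ _ _ fun h => by
      rw [← h.1, ← h.2, Fin.last_le_iff] at hba
      exact Fin.last_ne_zero_of_pos hi hba.symm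
  refine Subgroup.ne_bot_iff_exists_ne_one.2
    ⟨⟨UT.ofMatrix hU, 1, UT.coe_ofMatrix hU⟩, fun h => ?_⟩
  have hcorner := congrArg (fun M : UT R (i + 1) => (M.1 : Mat) 0 (Fin.last i))
    (congrArg Subtype.val h)
  simp only [UT.coe_ofMatrix, Matrix.add_apply, Matrix.single_apply_same, mul_one,
    Matrix.one_apply_ne' (Fin.last_ne_zero_of_pos hi), zero_add, OneMemClass.coe_one,
    Units.val_one] at hcorner
  rw [← Nat.cast_pow, ZMod.natCast_eq_zero_iff,
    Nat.pow_dvd_pow_iff_le_right hp.one_lt] at hcorner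
  omega

end Corner

section PowerSubgroup

variable {p i i' j j' : ℕ}

lemma pPow_le_cornerSub (hp : p.Prime) (hi : 0 < i) (hi' : 0 < i') (hj : j ≤ j')
    (hle : i ≤ i' * p ^ (j' - j)) :
    pPow (UTk (ZMod (p ^ (j + 1))) (i + 1) i') (p ^ j') ≤ cornerSub p j i := by
  refine (Subgroup.closure_le _).2 ?_
  rintro _ ⟨y, hy, rfl⟩
  obtain ⟨N, hyN, hN⟩ := exists_eq_one_add_of_mem_UTk hy
  rw [SetLike.mem_coe, mem_cornerSub_iff hi, UT.coe_pow, hyN]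
  refine ⟨fun a b hab => one_add_pow_apply_eq_one_apply hp hN ?_,
    dvd_one_add_pow_apply hp hj hi' hN (Fin.last_ne_zero_of_pos hi).symm (by simpa using hle)⟩
  have hb : (b : ℕ) < a + i := by
    by_cases ha : a = 0
    · have := Fin.val_lt_last fun h => hab ⟨ha, h⟩
      simp [ha, this]
    · have := Fin.pos_iff_ne_zero.2 ha
      omega
  omega

lemma pPow_eq_bot (hp : p.Prime) (hlt : i < i' * p ^ (j' - j)) :
    pPow (UTk (ZMod (p ^ (j + 1))) (i + 1) i') (p ^ j') = ⊥ := by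
  rw [pPow, Subgroup.closure_eq_bot_iff]
  rintro _ ⟨y, hy, rfl⟩
  obtain ⟨N, hyN, hN⟩ := exists_eq_one_add_of_mem_UTk hy
  refine Subtype.ext (Units.ext ?_)
  rw [UT.coe_pow, hyN]
  ext a b
  rw [one_add_pow_apply_eq_one_apply hp hN (by omega)]
  rfl

lemma le_of_pPow_le_cornerSub (hp : p.Prime) (hi' : 0 < i') (hii' : i' ≤ i)
    (h : pPow (UTk (ZMod (p ^ (j + 1))) (i + 1) i') (p ^ j') ≤ cornerSub p j i) :
    i * p ^ j ≤ i' * p ^ j' := by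
  have hi : 0 < i := hi'.trans_le hii'
  have hx := h (Subgroup.subset_closure ⟨shiftUT hi', shiftUT_mem_UTk hi', rfl⟩)
  by_contra! hlt
  rcases le_or_gt j j' with hj | hj
  · -- the `(0, p^(j'-j) i')` entry is a binomial coefficient of `p`-adic valuation exactly `j`
    have hk : p ^ (j' - j) * i' < i := by
      refine Nat.lt_of_mul_lt_mul_right (a := p ^ j) ?_
      rwa [mul_right_comm, ← pow_add, Nat.sub_add_cancel hj, mul_comm]
    have hzero := ((mem_cornerSub_iff hi).1 hx).1 0 ⟨p ^ (j' - j) * i', by omega⟩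
      fun h => by simp [Fin.ext_iff] at h; omega
    rw [shiftUT_pow_apply hi' _ (p ^ (j' - j)) (by simp),
      Matrix.one_apply_ne' (Fin.ne_of_val_ne ?_)] at hzero
    · exact hp.not_pow_succ_dvd_choose_pow hj ((ZMod.natCast_eq_zero_iff _ _).1 hzero)
    · simpa using Nat.mul_ne_zero (pow_pos hp.pos _).ne' hi'.ne'
  · -- the entry at `(0, i')` is `p^j'`, not divisible by `p^j`
    have hdvd := dvd_apply_of_mem_cornerSub hi hx (b := ⟨1 * i', by omega⟩)
      (Fin.ne_of_val_ne (by simpa using hi'.ne'))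
    rw [shiftUT_pow_apply hi' _ 1 (by simp), Nat.choose_one_right, ← Nat.cast_pow] at hdvd
    have := ZMod.dvd_of_natCast_dvd_natCast (pow_dvd_pow p j.le_succ) hdvd
    rw [Nat.pow_dvd_pow_iff_le_right hp.one_lt] at this
    omega

lemma cornerSub_le_pPow (hp : p.Prime) (hi' : 0 < i') (hj : j ≤ j')
    (hi : i = i' * p ^ (j' - j)) :
    cornerSub p j i ≤ pPow (UTk (ZMod (p ^ (j + 1))) (i + 1) i') (p ^ j') := by
  set R := ZMod (p ^ (j + 1))
  have : NeZero (p ^ (j + 1)) := ⟨pow_ne_zero _ hp.ne_zero⟩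
  have hi_pos : 0 < i := hi ▸ Nat.mul_pos hi' (pow_pos hp.pos _)
  set g := shiftUT (S := R) (n := i + 1) hi' ^ p ^ j'
  have hg : g ∈ pPow (UTk R (i + 1) i') (p ^ j') :=
    Subgroup.subset_closure ⟨shiftUT hi', shiftUT_mem_UTk hi', rfl⟩
  obtain ⟨m, hm⟩ := hp.pow_dvd_choose_pow hj (pow_pos hp.pos _) le_rfl
  have hm_coprime : m.Coprime (p ^ (j + 1)) := by
    refine Nat.Coprime.pow_right _ (Nat.coprime_comm.1 (hp.coprime_iff_not_dvd.2 ?_))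
    rintro ⟨t, rfl⟩
    exact hp.not_pow_succ_dvd_choose_pow hj ⟨t, by rw [hm]; ring⟩
  -- `g = 1 + p^j m E` with `m` a unit, so its powers exhaust the corner subgroup
  have hg_coe : (g.1 : Matrix (Fin (i + 1)) (Fin (i + 1)) R) =
      1 + Matrix.single 0 (Fin.last i) ((p : R) ^ j * m) := by
    rw [coe_eq_one_add_single_of_mem_cornerSub hi_pos
      (pPow_le_cornerSub hp hi_pos hi' hj hi.le hg), shiftUT_pow_apply hi' _ (p ^ (j' - j))
      (by simp [hi, mul_comm]), hm, Nat.cast_mul, Nat.cast_pow]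
  rintro M ⟨c, hc⟩
  set u := ZMod.unitOfCoprime m hm_coprime
  have hM : M = g ^ ((u⁻¹ * c : R).val) := by
    refine Subtype.ext (Units.ext ?_)
    rw [hc, UT.coe_pow, hg_coe, one_add_single_pow hi_pos, ZMod.natCast_zmod_val,
      ← ZMod.coe_unitOfCoprime m hm_coprime, mul_right_comm, Units.inv_mul, one_mul]
  exact hM ▸ pow_mem hg _

end PowerSubgroup

/-- Let `p` be a prime, `i ≥ 1`, `j ≥ 0`, `U = U_i(ℤ/p^{j+1})`, `1 ≤ i' ≤ i`, `j' ≥ 0`.  Then: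
(b) `(U^{(i')})^{p^{j'}} = I + p^j (ℤ/p^{j+1}) E_{1,i+1}` iff `j' ≥ j` and `i = i' * p^{j'-j}`;
(c) `(U^{(i')})^{p^{j'}} ⊆ I + p^j (ℤ/p^{j+1}) E_{1,i+1}` iff `i' * p^{j'} ≥ i * p^j`. -/
theorem stmt_10 (p i i' j j' : ℕ) (hp : p.Prime) (hi : 1 ≤ i) (h1 : 1 ≤ i') (h2 : i' ≤ i) :
    (pPow (UTk (ZMod (p ^ (j + 1))) (i + 1) i') (p ^ j') = cornerSub p j i ↔
      (j ≤ j' ∧ i = i' * p ^ (j' - j))) ∧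
    (pPow (UTk (ZMod (p ^ (j + 1))) (i + 1) i') (p ^ j') ≤ cornerSub p j i ↔
      i * p ^ j ≤ i' * p ^ j') := by
  have hle_iff := Nat.mul_pow_le_mul_pow_iff (j := j) (j' := j') hp.one_lt h1 h2
  refine ⟨⟨fun h => ?_, fun ⟨hj, heq⟩ => ?_⟩, ⟨le_of_pPow_le_cornerSub hp h1 h2,
    fun h => pPow_le_cornerSub hp hi h1 (hle_iff.1 h).1 (hle_iff.1 h).2⟩⟩
  · obtain ⟨hj, hle⟩ := hle_iff.1 (le_of_pPow_le_cornerSub hp h1 h2 h.le)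
    refine ⟨hj, hle.eq_or_lt.resolve_right fun hlt => ?_⟩
    exact cornerSub_ne_bot hp hi (h ▸ pPow_eq_bot hp hlt)
  · exact le_antisymm (pPow_le_cornerSub hp hi h1 hj heq.le) (cornerSub_le_pPow hp h1 hj heq)
end
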